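/- Exponential formula, unital case: let (S, ⊕, σ, ε) be a locally finite SFD partial semigroup, R a commutative ℚ-algebra, and c : S → R a multiplicative equivariant statistics with c(ε) = 1. Then in R[[z]], EGF(S; z) = exp(EGF(atoms(S); z)), where exp(g) := ∑_{k≥0} gᵏ/k! (well defined since EGF(atoms(S); z) has zero constant term). -/

import Mathlib

/-- A square-free decomposable (SFD) partial semigroup. -/
structure SFD (S : Type*) where
  eps : S
  op : S → S → S
  supp : S → Finset ℕ+
  supp_eq_empty : ∀ ω : S, supp ω = ∅ ↔ ω = eps
  eps_op : ∀ ω : S, op eps ω = ω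
  op_eps : ∀ ω : S, op ω eps = ω
  supp_op : ∀ ω₁ ω₂ : S, supp ω₁ ∩ supp ω₂ = ∅ →
      supp (op ω₁ ω₂) = supp ω₁ ∪ supp ω₂
  op_comm : ∀ ω₁ ω₂ : S, supp ω₁ ∩ supp ω₂ = ∅ → op ω₁ ω₂ = op ω₂ ω₁
  op_assoc : ∀ ω₁ ω₂ ω₃ : S, supp ω₁ ∩ supp ω₂ = ∅ →
      supp ω₁ ∩ supp ω₃ = ∅ → supp ω₂ ∩ supp ω₃ = ∅ →
      op (op ω₁ ω₂) ω₃ = op ω₁ (op ω₂ ω₃)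
  levi : ∀ a b c d : S, supp a ∩ supp b = ∅ → supp c ∩ supp d = ∅ →
      op a b = op c d →
      ∃ w11 w12 w21 w22 : S,
        supp w11 ∩ supp w12 = ∅ ∧ supp w21 ∩ supp w22 = ∅ ∧
        supp w11 ∩ supp w21 = ∅ ∧ supp w12 ∩ supp w22 = ∅ ∧
        a = op w11 w12 ∧ b = op w21 w22 ∧ c = op w11 w21 ∧ d = op w12 w22

/-- Iterated sum of a list of elements. -/
def SFD.opList {S : Type*} (P : SFD S) : List S → S
  | [] => P.eps
  | a :: l => P.op a (P.opList l)

/-- Iterated sum of a finite family indexed by `Fin n`. -/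
def SFD.opFam {S : Type*} (P : SFD S) {n : ℕ} (ω : Fin n → S) : S :=
  P.opList (List.ofFn ω)

/-- An atom: a nonunit element which cannot be split. -/
def SFD.IsAtom {S : Type*} (P : SFD S) (ω : S) : Prop :=
  ω ≠ P.eps ∧ ∀ ω₁ ω₂ : S, P.supp ω₁ ∩ P.supp ω₂ = ∅ → ω = P.op ω₁ ω₂ →
    ω₁ = P.eps ∨ ω₂ = P.eps

/-- The interval `[1..n]` as a finite set of positive integers. -/
def pInterval (n : ℕ) : Finset ℕ+ :=
  (Finset.range n).image (fun i => ⟨i + 1, Nat.succ_pos i⟩)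


/-- The exponential generating series of a subset `X ⊆ S` with respect to a
statistics `c`: `EGF(X; z) = ∑_{n ≥ 0} c(X_{[1..n]}) zⁿ/n!`. -/
noncomputable def EGF {S : Type*} {R : Type*} [CommRing R] [Algebra ℚ R]
    (P : SFD S) (c : S → R) (X : Set S) : PowerSeries R :=
  PowerSeries.mk fun n =>
    ((n.factorial : ℚ)⁻¹) • ∑ᶠ ω ∈ {w ∈ X | P.supp w = pInterval n}, c ω

/-- The exponential `exp(g) = ∑_{k ≥ 0} gᵏ/k!` of a formal power series,
computed coefficientwise (the sum of the `n`-th coefficients of the `gᵏ/k!`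
has finite support when `g` has zero constant term). -/
noncomputable def expPS {R : Type*} [CommRing R] [Algebra ℚ R]
    (g : PowerSeries R) : PowerSeries R :=
  PowerSeries.mk fun n =>
    ∑ᶠ k : ℕ, ((k.factorial : ℚ)⁻¹) • PowerSeries.coeff (R := R) n (g ^ k)

/-!
Fix a point `p ∈ σ(ω)`. Splitting off atoms one at a time shows that `ω = α ⊕ ρ` for an atom `α`
whose support contains `p`, and Levi's property makes this decomposition unique. Summing `c` over
it gives `c(S_{F ∪ {p}}) = ∑_{B ⊆ F} c(atoms_{B ∪ {p}}) c(S_{F \ B})` for `p ∉ F`. By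
equivariance and induction on `|F|`, `c(S_F)` depends only on `|F|`, and the identity becomes
`w_{n+1} = ∑_m (n choose m) a_{m+1} w_{n-m}`: that is, `f' = f g'` for `f = EGF(S)` and
`g = EGF(atoms(S))`. The series `exp(g) = exp ∘ g` solves the same linear equation with the same
constant term `1`, and over a `ℚ`-algebra such a solution is unique.
-/

open Finset PowerSeries

namespace PowerSeries

variable {R : Type*} [CommRing R]

theorem eq_of_derivative_eq_mul [IsAddTorsionFree R] {f₁ f₂ h : R⟦X⟧}
    (h₁ : d⁄dX R f₁ = f₁ * h) (h₂ : d⁄dX R f₂ = f₂ * h)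
    (h₀ : constantCoeff f₁ = constantCoeff f₂) : f₁ = f₂ := by
  ext n
  induction n using Nat.strong_induction_on with
  | _ n ih =>
  cases n with
  | zero => simpa using h₀
  | succ n =>
    have hcoeff : (n + 1) • coeff (n + 1) f₁ = (n + 1) • coeff (n + 1) f₂ := by
      simp only [nsmul_eq_mul, Nat.cast_add_one, mul_comm _ (coeff (n + 1) _),
        ← coeff_derivative, h₁, h₂, coeff_mul]
      refine sum_congr rfl fun p hp => ?_
      rw [ih p.1 (by have := mem_antidiagonal.mp hp; omega)]
    exact (smul_right_inj n.succ_ne_zero).mp hcoeff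

variable [Algebra ℚ R]

def egf (a : ℕ → R) : R⟦X⟧ := mk fun n => (n.factorial : ℚ)⁻¹ • a n

def binomialConv (a b : ℕ → R) (n : ℕ) : R :=
  ∑ m ∈ range (n + 1), n.choose m • (a m * b (n - m))

@[simp]
theorem constantCoeff_egf (a : ℕ → R) : constantCoeff (egf a) = a 0 := by
  simp [egf, ← coeff_zero_eq_constantCoeff_apply]

theorem derivative_egf (a : ℕ → R) : d⁄dX R (egf a) = egf fun n => a (n + 1) := by
  ext n
  have h : ((n + 1).factorial : ℚ)⁻¹ * (n + 1) = (n.factorial : ℚ)⁻¹ := by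
    rw [Nat.factorial_succ, Nat.cast_mul, Nat.cast_add_one]; field_simp
  rw [coeff_derivative, egf, egf, coeff_mk, coeff_mk, ← h, mul_comm, mul_smul,
    Algebra.smul_def ((n : ℚ) + 1), map_add, map_natCast, map_one, mul_smul_comm]

theorem egf_mul (a b : ℕ → R) : egf a * egf b = egf (binomialConv a b) := by
  ext n
  rw [coeff_mul, Nat.sum_antidiagonal_eq_sum_range_succ_mk, egf, egf, egf, coeff_mk,
    binomialConv, smul_sum]
  refine sum_congr rfl fun m hm => ?_
  have hmn : m ≤ n := Nat.lt_succ_iff.mp (mem_range.mp hm)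
  have h : (m.factorial : ℚ)⁻¹ * ((n - m).factorial : ℚ)⁻¹
      = (n.factorial : ℚ)⁻¹ * n.choose m := by
    rw [Nat.cast_choose ℚ hmn]; field_simp
  simp only [coeff_mk, smul_mul_smul_comm, h, mul_smul, Nat.cast_smul_eq_nsmul]

theorem expPS_eq_subst {g : R⟦X⟧} (hg : constantCoeff g = 0) :
    expPS g = (exp R).subst g := by
  ext n
  rw [expPS, coeff_mk, coeff_subst' (HasSubst.of_constantCoeff_zero' hg)]
  refine finsum_congr fun k => ?_
  rw [coeff_exp, smul_eq_mul, ← Algebra.smul_def, one_div]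

theorem derivative_expPS {g : R⟦X⟧} (hg : constantCoeff g = 0) :
    d⁄dX R (expPS g) = expPS g * d⁄dX R g := by
  rw [expPS_eq_subst hg, derivative_subst (HasSubst.of_constantCoeff_zero' hg), derivative_exp]

theorem constantCoeff_expPS {g : R⟦X⟧} (hg : constantCoeff g = 0) :
    constantCoeff (expPS g) = 1 := by
  rw [← coeff_zero_eq_constantCoeff_apply, expPS, coeff_mk, finsum_eq_single _ 0]
  · simp
  · intro k hk
    simp [hg, zero_pow hk]

end PowerSeries

theorem pInterval_zero : pInterval 0 = ∅ := rfl

theorem pInterval_card (n : ℕ) : (pInterval n).card = n := by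
  refine (card_image_of_injective (s := range n)
    (f := fun i : ℕ => (⟨i + 1, i.succ_pos⟩ : ℕ+)) fun i j h => ?_).trans (card_range n)
  simpa using congrArg PNat.val h

theorem pInterval_nonempty {n : ℕ} (hn : n ≠ 0) : (pInterval n).Nonempty := by
  rw [← card_pos, pInterval_card]
  exact Nat.pos_of_ne_zero hn

namespace SFD

variable {S : Type*} (P : SFD S)

def LocallyFinite : Prop := ∀ F : Finset ℕ+, {ω : S | P.supp ω = F}.Finite

def IsMultiplicative {R : Type*} [Mul R] (c : S → R) : Prop :=
  ∀ ω₁ ω₂ : S, P.supp ω₁ ∩ P.supp ω₂ = ∅ → c (P.op ω₁ ω₂) = c ω₁ * c ω₂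

def atoms : Set S := {w | P.IsAtom w}

def fiber (X : Set S) (F : Finset ℕ+) : Set S := {w ∈ X | P.supp w = F}

noncomputable def fiberSum {R : Type*} [AddCommMonoid R] (c : S → R) (X : Set S)
    (F : Finset ℕ+) : R :=
  ∑ᶠ ω ∈ P.fiber X F, c ω

def IsEquivariant {R : Type*} [AddCommMonoid R] (c : S → R) : Prop :=
  ∀ F₁ F₂ : Finset ℕ+, F₁.card = F₂.card → P.fiberSum c P.atoms F₁ = P.fiberSum c P.atoms F₂

@[simp]
theorem mem_fiber {X : Set S} {F : Finset ℕ+} {ω : S} :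
    ω ∈ P.fiber X F ↔ ω ∈ X ∧ P.supp ω = F :=
  Iff.rfl

theorem supp_eps : P.supp P.eps = ∅ := (P.supp_eq_empty _).2 rfl

theorem ne_eps_of_mem_supp {p : ℕ+} {ω : S} (h : p ∈ P.supp ω) : ω ≠ P.eps := by
  rintro rfl
  simp [supp_eps] at h

theorem op_op_eq_op_op {α ρ ω : S} (hαρ : P.supp α ∩ P.supp ρ = ∅)
    (h : P.supp (P.op α ρ) ∩ P.supp ω = ∅) :
    P.supp α ∩ P.supp (P.op ρ ω) = ∅ ∧ P.op (P.op α ρ) ω = P.op α (P.op ρ ω) := by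
  rw [P.supp_op _ _ hαρ, union_inter_distrib_right, union_eq_empty] at h
  refine ⟨?_, P.op_assoc _ _ _ hαρ h.1 h.2⟩
  rw [P.supp_op _ _ h.2, inter_union_distrib_left, hαρ, h.1, union_empty]

theorem exists_atom_op_eq {p : ℕ+} {ω : S} (hp : p ∈ P.supp ω) :
    ∃ α ρ, P.IsAtom α ∧ p ∈ P.supp α ∧ P.supp α ∩ P.supp ρ = ∅ ∧ P.op α ρ = ω := by
  induction hn : (P.supp ω).card using Nat.strong_induction_on generalizing ω with
  | _ n ih =>
  by_cases hat : P.IsAtom ω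
  · exact ⟨ω, P.eps, hat, hp, by simp [supp_eps], P.op_eps ω⟩
  obtain ⟨ω₁, ω₂, hd, rfl, h₁, h₂⟩ : ∃ ω₁ ω₂, P.supp ω₁ ∩ P.supp ω₂ = ∅ ∧
      ω = P.op ω₁ ω₂ ∧ ω₁ ≠ P.eps ∧ ω₂ ≠ P.eps := by
    by_contra! h
    exact hat ⟨P.ne_eps_of_mem_supp hp,
      fun ω₁ ω₂ hd he => or_iff_not_imp_left.2 (h ω₁ ω₂ hd he)⟩
  have hsplit : ∀ ω₁ ω₂, P.supp ω₁ ∩ P.supp ω₂ = ∅ → ω₂ ≠ P.eps → p ∈ P.supp ω₁ →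
      (P.supp (P.op ω₁ ω₂)).card = n →
      ∃ α ρ, P.IsAtom α ∧ p ∈ P.supp α ∧ P.supp α ∩ P.supp ρ = ∅ ∧
        P.op α ρ = P.op ω₁ ω₂ := by
    intro ω₁ ω₂ hd h₂ hp₁ hn
    have hlt : (P.supp ω₁).card < n := by
      have : 0 < (P.supp ω₂).card :=
        card_pos.2 (nonempty_iff_ne_empty.2 fun h => h₂ ((P.supp_eq_empty _).1 h))
      rw [← hn, P.supp_op _ _ hd, card_union_of_disjoint (disjoint_iff_inter_eq_empty.2 hd)]
      omega
    obtain ⟨α, ρ, hα, hpα, hαρ, rfl⟩ := ih _ hlt hp₁ rfl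
    obtain ⟨hd', hassoc⟩ := P.op_op_eq_op_op hαρ hd
    exact ⟨α, P.op ρ ω₂, hα, hpα, hd', hassoc.symm⟩
  rcases mem_union.1 (P.supp_op _ _ hd ▸ hp) with hp₁ | hp₂
  · exact hsplit ω₁ ω₂ hd h₂ hp₁ hn
  · rw [P.op_comm _ _ hd] at hn ⊢
    exact hsplit ω₂ ω₁ (by rwa [inter_comm]) h₁ hp₂ hn

theorem atom_op_inj {p : ℕ+} {α ρ α' ρ' : S} (hα : P.IsAtom α) (hpα : p ∈ P.supp α)
    (hαρ : P.supp α ∩ P.supp ρ = ∅) (hα' : P.IsAtom α') (hpα' : p ∈ P.supp α')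
    (hαρ' : P.supp α' ∩ P.supp ρ' = ∅) (h : P.op α ρ = P.op α' ρ') : α = α' ∧ ρ = ρ' := by
  obtain ⟨w₁₁, w₁₂, w₂₁, w₂₂, h₁, -, h₃, h₄, rfl, rfl, rfl, rfl⟩ :=
    P.levi _ _ _ _ hαρ hαρ' h
  have hw₁₂ : w₁₂ = P.eps := by
    refine (hα.2 _ _ h₁ rfl).resolve_left fun hw => ?_
    rw [hw, P.eps_op] at hpα
    have : p ∈ P.supp (P.op w₁₁ w₂₁) ∩ P.supp (P.op w₁₂ w₂₂) := by
      rw [P.supp_op _ _ h₄]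
      exact mem_inter.2 ⟨hpα', mem_union_left _ hpα⟩
    simp [hαρ'] at this
  subst hw₁₂
  rw [P.op_eps] at hpα ⊢
  have hw₂₁ : w₂₁ = P.eps := (hα'.2 _ _ h₃ rfl).resolve_left (P.ne_eps_of_mem_supp hpα)
  subst hw₂₁
  simp [P.op_eps, P.eps_op]

variable {P}

theorem fiber_finite (hlf : P.LocallyFinite) (X : Set S) (F : Finset ℕ+) :
    (P.fiber X F).Finite :=
  (hlf F).subset fun _ h => h.2

variable {R : Type*} [CommRing R]

theorem fiberSum_univ_empty {c : S → R} (hε : c P.eps = 1) :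
    P.fiberSum c Set.univ ∅ = 1 := by
  have : P.fiber Set.univ ∅ = {P.eps} := by
    ext ω
    simp [fiber, P.supp_eq_empty]
  rw [fiberSum, this, finsum_mem_singleton, hε]

theorem fiberSum_atoms_empty (c : S → R) : P.fiberSum c P.atoms ∅ = 0 := by
  have : P.fiber P.atoms ∅ = ∅ := by
    ext ω
    simp only [fiber, atoms, P.supp_eq_empty, Set.mem_ofPred_eq, Set.mem_empty_iff_false,
      iff_false, not_and]
    exact fun h => h.1
  rw [fiberSum, this, finsum_mem_empty]

theorem fiberSum_univ_insert (hlf : P.LocallyFinite) {c : S → R}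
    (hmul : P.IsMultiplicative c) {p : ℕ+} {F : Finset ℕ+} (hp : p ∉ F) :
    P.fiberSum c Set.univ (insert p F) = ∑ B ∈ F.powerset,
      P.fiberSum c P.atoms (insert p B) * P.fiberSum c Set.univ (F \ B) := by
  have hdisj : ∀ B, insert p B ∩ (F \ B) = ∅ := fun B => by grind
  simp only [fiberSum, finsum_mem_eq_finite_toFinset_sum _ (fiber_finite hlf _ _), sum_mul_sum]
  simp only [← sum_product']
  symm
  refine (sum_sigma _ _ fun x : (_ : Finset ℕ+) × S × S => c x.2.1 * c x.2.2).symm.trans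
    (sum_bij (fun x _ => P.op x.2.1 x.2.2) ?_ ?_ ?_ ?_)
  all_goals simp only [mem_sigma, mem_product, Set.Finite.mem_toFinset, mem_fiber, mem_powerset,
    atoms, Set.mem_ofPred_eq, Set.mem_univ, true_and, Sigma.forall, Prod.forall, Sigma.exists,
    Prod.exists]
  · rintro B α ρ ⟨hB, ⟨-, hsα⟩, hsρ⟩
    rw [P.supp_op _ _ (hsα ▸ hsρ ▸ hdisj B), hsα, hsρ]
    grind
  · rintro B α ρ ⟨hB, ⟨hα, hsα⟩, hsρ⟩ B' α' ρ' ⟨hB', ⟨hα', hsα'⟩, hsρ'⟩ h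
    obtain ⟨rfl, rfl⟩ := P.atom_op_inj hα (hsα ▸ mem_insert_self p B) (hsα ▸ hsρ ▸ hdisj B)
      hα' (hsα' ▸ mem_insert_self p B') (hsα' ▸ hsρ' ▸ hdisj B') h
    obtain rfl : B = B' := by
      rw [← erase_insert fun h => hp (hB h), ← erase_insert fun h => hp (hB' h), ← hsα, ← hsα']
    rfl
  · intro ω hω
    obtain ⟨α, ρ, hα, hpα, hd, rfl⟩ := P.exists_atom_op_eq (hω ▸ mem_insert_self p F)
    rw [P.supp_op _ _ hd] at hω
    have hω' := Finset.ext_iff.1 hω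
    have hd' := disjoint_left.1 (disjoint_iff_inter_eq_empty.2 hd)
    simp only [mem_union, mem_insert] at hω'
    refine ⟨(P.supp α).erase p, α, ρ,
      ⟨?_, (Set.Finite.mem_toFinset _).2 ⟨hα, (insert_erase hpα).symm⟩, ?_⟩, rfl⟩
    all_goals grind
  · rintro B α ρ ⟨-, ⟨-, hsα⟩, hsρ⟩
    exact (hmul α ρ (hsα ▸ hsρ ▸ hdisj B)).symm

theorem fiberSum_univ_eq_binomialConv (hlf : P.LocallyFinite) {c : S → R}
    (hmul : P.IsMultiplicative c) (heqv : P.IsEquivariant c) {F : Finset ℕ+} {p : ℕ+}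
    (hp : p ∈ F) (hsmall : ∀ G : Finset ℕ+, G.card < F.card →
      P.fiberSum c Set.univ G = P.fiberSum c Set.univ (pInterval G.card)) :
    P.fiberSum c Set.univ F = binomialConv (fun m => P.fiberSum c P.atoms (pInterval (m + 1)))
      (fun m => P.fiberSum c Set.univ (pInterval m)) (F.card - 1) := by
  have hp' : p ∉ F.erase p := notMem_erase p F
  conv_lhs => rw [← insert_erase hp]
  rw [fiberSum_univ_insert hlf hmul hp', ← card_erase_of_mem hp, binomialConv,
    ← sum_powerset_apply_card]
  refine sum_congr rfl fun B hB => ?_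
  have hBF : B ⊆ F.erase p := mem_powerset.1 hB
  rw [heqv _ (pInterval (B.card + 1))
      (by rw [card_insert_of_notMem fun h => hp' (hBF h), pInterval_card]),
    hsmall _ ((card_le_card sdiff_subset).trans_lt (card_erase_lt_of_mem hp)),
    card_sdiff_of_subset hBF]

theorem fiberSum_univ_eq_pInterval_card (hlf : P.LocallyFinite) {c : S → R}
    (hmul : P.IsMultiplicative c) (heqv : P.IsEquivariant c) (F : Finset ℕ+) :
    P.fiberSum c Set.univ F = P.fiberSum c Set.univ (pInterval F.card) := by
  induction hn : F.card using Nat.strong_induction_on generalizing F with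
  | _ n ih =>
  obtain rfl | ⟨p, hp⟩ := F.eq_empty_or_nonempty
  · rw [← hn, card_empty, pInterval_zero]
  have hsmall : ∀ G : Finset ℕ+, G.card < n →
      P.fiberSum c Set.univ G = P.fiberSum c Set.univ (pInterval G.card) :=
    fun G hG => ih _ hG G rfl
  obtain ⟨q, hq⟩ := pInterval_nonempty (n := n) (hn ▸ (card_pos.2 ⟨p, hp⟩).ne')
  rw [fiberSum_univ_eq_binomialConv hlf hmul heqv hp (by rwa [hn]),
    fiberSum_univ_eq_binomialConv hlf hmul heqv hq (by rwa [pInterval_card]), pInterval_card, hn]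

theorem fiberSum_univ_pInterval_succ (hlf : P.LocallyFinite) {c : S → R}
    (hmul : P.IsMultiplicative c) (heqv : P.IsEquivariant c) (n : ℕ) :
    P.fiberSum c Set.univ (pInterval (n + 1)) =
      binomialConv (fun m => P.fiberSum c P.atoms (pInterval (m + 1)))
        (fun m => P.fiberSum c Set.univ (pInterval m)) n := by
  obtain ⟨p, hp⟩ := pInterval_nonempty n.succ_ne_zero
  rw [fiberSum_univ_eq_binomialConv hlf hmul heqv hp
      fun G _ => fiberSum_univ_eq_pInterval_card hlf hmul heqv G,
    pInterval_card, Nat.succ_sub_one]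

variable [Algebra ℚ R]

theorem EGF_eq_egf (c : S → R) (X : Set S) :
    EGF P c X = egf fun n => P.fiberSum c X (pInterval n) := rfl

theorem derivative_EGF_univ (hlf : P.LocallyFinite) {c : S → R}
    (hmul : P.IsMultiplicative c) (heqv : P.IsEquivariant c) :
    d⁄dX R (EGF P c Set.univ) = EGF P c Set.univ * d⁄dX R (EGF P c P.atoms) := by
  rw [EGF_eq_egf, EGF_eq_egf, derivative_egf, derivative_egf, mul_comm, egf_mul]
  exact congrArg egf (funext (fiberSum_univ_pInterval_succ hlf hmul heqv))

end SFD

/-- exponential formula, unital case: for a locally finite SFD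
partial semigroup and a multiplicative equivariant statistics `c` with
`c(ε) = 1`, `EGF(S; z) = exp(EGF(atoms(S); z))` in `R[[z]]`. -/
theorem exponential_formula_unital {S : Type*} {R : Type*} [CommRing R]
    [Algebra ℚ R] (P : SFD S)
    (hlf : ∀ F : Finset ℕ+, {ω : S | P.supp ω = F}.Finite)
    (c : S → R)
    (hmul : ∀ ω₁ ω₂ : S, P.supp ω₁ ∩ P.supp ω₂ = ∅ →
      c (P.op ω₁ ω₂) = c ω₁ * c ω₂)
    (heqv : ∀ F₁ F₂ : Finset ℕ+, F₁.card = F₂.card →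
      (∑ᶠ ω ∈ {w : S | P.IsAtom w ∧ P.supp w = F₁}, c ω)
        = ∑ᶠ ω ∈ {w : S | P.IsAtom w ∧ P.supp w = F₂}, c ω)
    (heps : c P.eps = 1) :
    EGF P c Set.univ = expPS (EGF P c {w : S | P.IsAtom w}) := by
  change _ = expPS (EGF P c P.atoms)
  have : IsAddTorsionFree R := .of_module_rat R
  have hg₀ : constantCoeff (EGF P c P.atoms) = 0 := by
    rw [SFD.EGF_eq_egf, constantCoeff_egf, pInterval_zero, SFD.fiberSum_atoms_empty]
  refine eq_of_derivative_eq_mul (SFD.derivative_EGF_univ hlf hmul heqv)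
    (derivative_expPS hg₀) ?_
  rw [constantCoeff_expPS hg₀, SFD.EGF_eq_egf, constantCoeff_egf, pInterval_zero,
    SFD.fiberSum_univ_empty heps]
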